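/- arXiv:1307.3748 — 2 statements merged into one kernel-verified Lean document; each statement's English description precedes it below -/
import Mathlib

section
/- Let g ∈ k[T][X_1,…,X_n] be an irreducible polynomial (over the field of fractions of k[T]) one of whose coefficients equals 1, and suppose σ is a ring automorphism of k[T][X_1,…,X_n] induced by T ↦ T^M (M > 1) fixing k, such that the zero sets of g and of g^σ coincide, i.e., g^σ = b·g for some nonzero scalar b. Then b = 1 and all coefficients of g lie in k. -/
/-! Comparing the coefficient of `g` equal to `1` on both sides of `g^σ = b • g` forces `b = 1`,
so every coefficient `c` of `g` satisfies `c(T^M) = c`. Since `deg c(T^M) = M · deg c` and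
`M > 1`, this leaves only constants. -/

open Polynomial

theorem Polynomial.eq_C_of_comp_X_pow_eq_self {R : Type*} [Semiring R] [NoZeroDivisors R]
    {M : ℕ} (hM : 1 < M) {p : R[X]} (hp : p.comp (X ^ M) = p) : p = C (p.coeff 0) := by
  nontriviality R
  have hdeg : p.natDegree * M = p.natDegree := by
    conv_rhs => rw [← hp]
    rw [natDegree_comp, natDegree_X_pow]
  have hzero : p.natDegree = 0 := by
    by_contra h
    nlinarith [Nat.pos_of_ne_zero h]
  exact eq_C_of_natDegree_eq_zero hzero

theorem MvPolynomial.map_apply_coeff_of_map_eq_C_mul_map {σ R S : Type*} [CommSemiring R]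
    [CommSemiring S] {φ ψ : R →+* S} {g : MvPolynomial σ R} {b : S}
    (h : g.map φ = C b * g.map ψ) (m : σ →₀ ℕ) : φ (g.coeff m) = b * ψ (g.coeff m) := by
  simpa only [coeff_map, coeff_C_mul] using congrArg (coeff m) h

theorem stmt8_general {k : Type*} [Field k] (n M : ℕ) (hM : 1 < M)
    (g : MvPolynomial (Fin n) (Polynomial k))
    (hone : ∃ m, MvPolynomial.coeff m g = 1)
    (b : RatFunc k)
    (hb : MvPolynomial.map
        ((algebraMap (Polynomial k) (RatFunc k)).comp
          ((Polynomial.aeval (Polynomial.X ^ M : Polynomial k)).toRingHom)) g =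
      MvPolynomial.C b * MvPolynomial.map (algebraMap (Polynomial k) (RatFunc k)) g) :
    b = 1 ∧ ∀ m, ∃ c : k, MvPolynomial.coeff m g = Polynomial.C c := by
  have hcoeff := MvPolynomial.map_apply_coeff_of_map_eq_C_mul_map hb
  obtain ⟨m₀, hm₀⟩ := hone
  have hb1 : b = 1 := by simpa [hm₀] using (hcoeff m₀).symm
  subst hb1
  refine ⟨rfl, fun m => ⟨(g.coeff m).coeff 0, eq_C_of_comp_X_pow_eq_self hM ?_⟩⟩
  rw [comp_eq_aeval]
  exact IsFractionRing.injective (Polynomial k) (RatFunc k) (by simpa using hcoeff m)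

/-- Let `g ∈ k[T][X₁,…,Xₙ]` be irreducible over `k(T)` with some coefficient equal to `1`,
and let `σ` be induced by `T ↦ T^M` (`M > 1`), acting coefficientwise. If `g^σ = b • g`
for a scalar `b ∈ k(T)`, then `b = 1` and all coefficients of `g` lie in `k`. -/
theorem stmt8 {k : Type*} [Field k] [IsAlgClosed k] (n M : ℕ) (hM : 1 < M)
    (g : MvPolynomial (Fin n) (Polynomial k))
    (hirr : Irreducible (MvPolynomial.map (algebraMap (Polynomial k) (RatFunc k)) g))
    (hone : ∃ m, MvPolynomial.coeff m g = 1)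
    (b : RatFunc k)
    (hb : MvPolynomial.map
        ((algebraMap (Polynomial k) (RatFunc k)).comp
          ((Polynomial.aeval (Polynomial.X ^ M : Polynomial k)).toRingHom)) g =
      MvPolynomial.C b * MvPolynomial.map (algebraMap (Polynomial k) (RatFunc k)) g) :
    b = 1 ∧ ∀ m, ∃ c : k, MvPolynomial.coeff m g = Polynomial.C c :=
  stmt8_general n M hM g hone b hb
end

section
/- Let k be an algebraically closed field, f a nonzero polynomial in n variables over the algebraic closure of k(t), and σ an automorphism of the algebraic closure of k(t) fixing k pointwise with σ(t) = t^M for some integer M > 1. If f divides f^{σ^{-1}} (the polynomial obtained by applying σ^{-1} to each coefficient) in the polynomial ring over the algebraic closure of k(t), then there exists a nonzero scalar a in the algebraic closure of k(t) such that a·f has all coefficients in k. -/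
/-!
Comparing total degrees in `f ∣ f^{σ⁻¹}` gives `f^{σ⁻¹} = c • f` for a scalar `c`, so every
ratio of two coefficients of `f` is fixed by `σ`. On `k(t)` the automorphism `σ` acts as
`t ↦ t^M`, whose only fixed points are the constants: for `r = p/q` the relation
`p(t^M) q(t) = p(t) q(t^M)` forces `deg p = deg q`, and then `p - s q` (with `s` the ratio of the
leading coefficients) satisfies the same relation with smaller degree, so it vanishes. If `b` is
fixed by `σ`, its minimal polynomial over `k(t)` divides its `σ`-twist, which is monic of the same
degree; hence the two agree, the coefficients lie in `k`, and `b ∈ k` since `k` is algebraically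
closed.
-/

open Polynomial

namespace Polynomial

theorem natDegree_eq_of_expand_mul_eq {R : Type*} [CommRing R] [IsDomain R] {M : ℕ} (hM : 1 < M)
    {a b : R[X]} (ha : a ≠ 0) (hb : b ≠ 0) (h : expand R M a * b = a * expand R M b) :
    a.natDegree = b.natDegree := by
  have hexpand {p : R[X]} (hp : p ≠ 0) : expand R M p ≠ 0 :=
    (map_ne_zero_iff _ (expand_injective (by omega))).mpr hp
  have hdeg := congrArg natDegree h
  rw [natDegree_mul (hexpand ha) hb, natDegree_mul ha (hexpand hb), natDegree_expand,
    natDegree_expand] at hdeg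
  rcases lt_trichotomy a.natDegree b.natDegree with hlt | heq | hgt
  · nlinarith
  · exact heq
  · nlinarith

theorem exists_eq_C_mul_of_expand_mul_eq {k : Type*} [Field k] {M : ℕ} (hM : 1 < M)
    {a b : k[X]} (hb : b ≠ 0) (h : expand k M a * b = a * expand k M b) :
    ∃ s : k, a = C s * b := by
  by_cases ha : a = 0
  · exact ⟨0, by simp [ha]⟩
  set s := a.leadingCoeff / b.leadingCoeff
  refine ⟨s, sub_eq_zero.mp (by_contra fun hd => ?_)⟩
  have hs : s ≠ 0 := div_ne_zero (leadingCoeff_ne_zero.mpr ha) (leadingCoeff_ne_zero.mpr hb)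
  have hab := natDegree_eq_of_expand_mul_eq hM ha hb h
  have hdb : (a - C s * b).natDegree = b.natDegree :=
    natDegree_eq_of_expand_mul_eq hM hd hb
      (by simp only [map_sub, map_mul, expand_C]; linear_combination h)
  have hlt : (a - C s * b).degree < a.degree := by
    apply degree_sub_lt_left _ ha
    · rw [leadingCoeff_mul, leadingCoeff_C, div_mul_cancel₀ _ (leadingCoeff_ne_zero.mpr hb)]
    · rw [degree_C_mul hs, degree_eq_natDegree ha, degree_eq_natDegree hb, hab]
  have := natDegree_lt_natDegree hd hlt
  omega

end Polynomial

namespace RatFunc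

variable {k : Type*} [Field k]

noncomputable def expand (k : Type*) [Field k] (M : ℕ) (hM : 0 < M) : RatFunc k →+* RatFunc k :=
  mapRingHom (Polynomial.expand k M)
    (nonZeroDivisors_le_comap_nonZeroDivisors_of_injective _ (expand_injective hM))

theorem expand_algebraMap {M : ℕ} (hM : 0 < M) (p : k[X]) :
    expand k M hM (algebraMap k[X] (RatFunc k) p) =
      algebraMap k[X] (RatFunc k) (Polynomial.expand k M p) := by
  rw [expand, coe_mapRingHom_eq_coe_map]
  simpa using map_apply_div (Polynomial.expand k M)
    (nonZeroDivisors_le_comap_nonZeroDivisors_of_injective _ (expand_injective hM)) p 1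

@[simp]
theorem expand_C {M : ℕ} (hM : 0 < M) (c : k) : expand k M hM (C c) = C c := by
  rw [← algebraMap_C, expand_algebraMap, Polynomial.expand_C]

@[simp]
theorem expand_X {M : ℕ} (hM : 0 < M) : expand k M hM X = X ^ M := by
  rw [← algebraMap_X, expand_algebraMap, Polynomial.expand_X, map_pow]

theorem exists_eq_C_of_expand_eq {M : ℕ} (hM : 1 < M) {r : RatFunc k}
    (hr : expand k M (Nat.zero_lt_of_lt hM) r = r) : ∃ c : k, r = C c := by
  have hden := algebraMap_ne_zero r.denom_ne_zero
  have hcross :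
      Polynomial.expand k M r.num * r.denom = r.num * Polynomial.expand k M r.denom := by
    apply IsFractionRing.injective k[X] (RatFunc k)
    rw [← num_div_denom r, map_div₀, expand_algebraMap, expand_algebraMap,
      div_eq_div_iff _ hden] at hr
    · simpa only [map_mul] using hr
    · exact algebraMap_ne_zero
        ((map_ne_zero_iff _ (expand_injective (by omega))).mpr r.denom_ne_zero)
  obtain ⟨s, hs⟩ := exists_eq_C_mul_of_expand_mul_eq hM r.denom_ne_zero hcross
  refine ⟨s, ?_⟩
  rw [← num_div_denom r, hs, map_mul, mul_div_cancel_right₀ _ hden, algebraMap_C]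

theorem ringHom_ext {L : Type*} [Semiring L] {f g : RatFunc k →+* L}
    (hC : ∀ c, f (C c) = g (C c)) (hX : f X = g X) : f = g := by
  apply IsLocalization.ringHom_ext (nonZeroDivisors k[X])
  apply Polynomial.ringHom_ext
  · simpa only [RingHom.comp_apply, algebraMap_C] using hC
  · simpa only [RingHom.comp_apply, algebraMap_X] using hX

end RatFunc

namespace MvPolynomial

theorem totalDegree_map_of_injective {R S σ : Type*} [CommSemiring R] [CommSemiring S]
    {φ : R →+* S} (hφ : Function.Injective φ) (p : MvPolynomial σ R) :
    (map φ p).totalDegree = p.totalDegree := by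
  simp only [totalDegree, support_map_of_injective p hφ]

theorem exists_eq_C_mul_of_dvd_of_totalDegree_le {R σ : Type*} [CommRing R] [IsDomain R]
    {f g : MvPolynomial σ R} (h : f ∣ g) (hg : g ≠ 0) (hdeg : g.totalDegree ≤ f.totalDegree) :
    ∃ c, g = C c * f := by
  obtain ⟨r, rfl⟩ := h
  have hr : r ≠ 0 := right_ne_zero_of_mul hg
  rw [totalDegree_mul_of_isDomain (left_ne_zero_of_mul hg) hr] at hdeg
  exact ⟨r.coeff 0, by rw [mul_comm, ← totalDegree_eq_zero_iff_eq_C.mp (by omega)]⟩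

end MvPolynomial

theorem minpoly_map_eq_self_of_apply_eq_self {K L : Type*} [Field K] [CommRing L] [Algebra K L]
    {τ : K →+* K} {σ : L →+* L} (hσ : σ.comp (algebraMap K L) = (algebraMap K L).comp τ)
    {b : L} (hb : IsIntegral K b) (hσb : σ b = b) : (minpoly K b).map τ = minpoly K b := by
  have hroot : aeval b ((minpoly K b).map τ) = 0 := by
    rw [aeval_def, eval₂_map, ← hσ, ← hσb, ← hom_eval₂, hσb, ← aeval_def, minpoly.aeval,
      map_zero]
  exact eq_of_monic_of_dvd_of_natDegree_le (minpoly.monic hb) ((minpoly.monic hb).map τ)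
    (minpoly.dvd K b hroot) (natDegree_map τ).le

theorem RatFunc.exists_eq_algebraMap_of_apply_eq_self {k L : Type*} [Field k] [IsAlgClosed k]
    [Field L] [Algebra k L] [Algebra (RatFunc k) L] [IsScalarTower k (RatFunc k) L] {M : ℕ}
    (hM : 1 < M) {σ : L →+* L} (hσ : σ.comp (algebraMap (RatFunc k) L) =
      (algebraMap (RatFunc k) L).comp (expand k M (Nat.zero_lt_of_lt hM)))
    {b : L} (hb : IsIntegral (RatFunc k) b) (hσb : σ b = b) : ∃ c : k, b = algebraMap k L c := by
  have hfixed := minpoly_map_eq_self_of_apply_eq_self hσ hb hσb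
  have hlifts : minpoly (RatFunc k) b ∈ lifts (algebraMap k (RatFunc k)) := by
    refine lifts_iff_coeff_lifts _ |>.mpr fun i => ?_
    obtain ⟨c, hc⟩ := exists_eq_C_of_expand_eq hM (by simpa using congrArg (coeff · i) hfixed)
    exact ⟨c, by rw [algebraMap_eq_C, hc]⟩
  obtain ⟨q, hq, -, hqm⟩ := lifts_and_degree_eq_and_monic hlifts (minpoly.monic hb)
  have hbk : IsIntegral k b :=
    ⟨q, hqm, by rw [← aeval_def, ← aeval_map_algebraMap (RatFunc k), hq, minpoly.aeval]⟩
  obtain ⟨c, hc⟩ := minpoly.mem_range_of_degree_eq_one k b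
    (IsAlgClosed.degree_eq_one_of_irreducible k (minpoly.irreducible hbk))
  exact ⟨c, hc.symm⟩

/-- If `f` is a nonzero polynomial over the algebraic closure of `k(t)`, `σ` an automorphism
fixing `k` with `σ(t) = t^M` (`M > 1`), and `f` divides `f^{σ⁻¹}` (coefficientwise `σ⁻¹`),
then some nonzero scalar multiple `a • f` has all its coefficients in `k`. -/
theorem stmt12 {k : Type*} [Field k] [IsAlgClosed k] (n M : ℕ) (hM : 1 < M)
    (σ : AlgebraicClosure (RatFunc k) ≃+* AlgebraicClosure (RatFunc k))
    (hfix : ∀ c : k, σ (algebraMap (RatFunc k) (AlgebraicClosure (RatFunc k)) (RatFunc.C c)) =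
      algebraMap (RatFunc k) (AlgebraicClosure (RatFunc k)) (RatFunc.C c))
    (ht : σ (algebraMap (RatFunc k) (AlgebraicClosure (RatFunc k)) RatFunc.X) =
      (algebraMap (RatFunc k) (AlgebraicClosure (RatFunc k)) RatFunc.X) ^ M)
    (f : MvPolynomial (Fin n) (AlgebraicClosure (RatFunc k))) (hf : f ≠ 0)
    (hdvd : f ∣ MvPolynomial.map (σ.symm : AlgebraicClosure (RatFunc k) →+* AlgebraicClosure (RatFunc k)) f) :
    ∃ a : AlgebraicClosure (RatFunc k), a ≠ 0 ∧ ∀ m, ∃ c : k,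
      a * MvPolynomial.coeff m f =
        algebraMap (RatFunc k) (AlgebraicClosure (RatFunc k)) (RatFunc.C c) := by
  set A := AlgebraicClosure (RatFunc k)
  have hinj : Function.Injective (σ.symm : A →+* A) := σ.symm.injective
  obtain ⟨c, hc⟩ := MvPolynomial.exists_eq_C_mul_of_dvd_of_totalDegree_le hdvd
    ((map_ne_zero_iff _ (MvPolynomial.map_injective _ hinj)).mpr hf)
    (MvPolynomial.totalDegree_map_of_injective hinj f).le
  have hcoeff (m) : σ.symm (f.coeff m) = c * f.coeff m := by
    simpa [MvPolynomial.coeff_map] using congrArg (MvPolynomial.coeff m) hc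
  obtain ⟨m₀, hm₀⟩ := MvPolynomial.ne_zero_iff.mp hf
  have hc0 : c ≠ 0 := fun h0 => hm₀ (hinj (by simp [hcoeff, h0]))
  have hσ : (σ : A →+* A).comp (algebraMap (RatFunc k) A) =
      (algebraMap (RatFunc k) A).comp (RatFunc.expand k M (Nat.zero_lt_of_lt hM)) :=
    RatFunc.ringHom_ext (by simpa using hfix) (by simpa using ht)
  refine ⟨(f.coeff m₀)⁻¹, inv_ne_zero hm₀, fun m => ?_⟩
  have hfixed : σ ((f.coeff m₀)⁻¹ * f.coeff m) = (f.coeff m₀)⁻¹ * f.coeff m := by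
    rw [← σ.eq_symm_apply, map_mul, map_inv₀, hcoeff, hcoeff, mul_inv, mul_mul_mul_comm,
      inv_mul_cancel₀ hc0, one_mul]
  obtain ⟨d, hd⟩ := RatFunc.exists_eq_algebraMap_of_apply_eq_self hM hσ
    (Algebra.IsIntegral.isIntegral _) hfixed
  exact ⟨d, by rw [hd, IsScalarTower.algebraMap_apply k (RatFunc k) A, RatFunc.algebraMap_eq_C]⟩
end
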